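/- For an operator f between lattices, the dcpo-lifted extension f^ℱ-bar on the canonical extensions agrees with the sigma-extension: f^ℱ-bar = f^σ, and it is Scott-continuous. -/

import Mathlib

section Pres
variable {P : Type*} [Preorder P]

/-- A `C`-ideal: downward closed and closed under covers. -/
def IsCIdeal (C : P → Set P → Prop) (X : Set P) : Prop :=
  (∀ x ∈ X, ∀ y, y ≤ x → y ∈ X) ∧ ∀ x U, C x U → U ⊆ X → x ∈ X

/-- The collection of `C`-ideals, ordered by inclusion. -/
abbrev CIdl (C : P → Set P → Prop) : Type _ := {X : Set P // IsCIdeal C X}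

/-- The `C`-ideal generated by a set. -/
def genC (C : P → Set P → Prop) (S : Set P) : Set P := ⋂₀ {X | IsCIdeal C X ∧ S ⊆ X}

lemma isCIdeal_sInter (C : P → Set P → Prop) (T : Set (Set P))
    (hT : ∀ X ∈ T, IsCIdeal C X) : IsCIdeal C (⋂₀ T) := by
  refine ⟨?_, ?_⟩
  · intro x hx y hyx
    rw [Set.mem_sInter] at *
    intro X hX
    exact (hT X hX).1 x (hx X hX) y hyx
  · intro x U hU hsub
    rw [Set.mem_sInter]
    intro X hX
    exact (hT X hX).2 x U hU fun u hu => Set.mem_sInter.mp (hsub hu) X hX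

lemma isCIdeal_genC (C : P → Set P → Prop) (S : Set P) : IsCIdeal C (genC C S) :=
  isCIdeal_sInter C _ fun _ hX => hX.1

lemma subset_genC (C : P → Set P → Prop) (S : Set P) : S ⊆ genC C S :=
  fun _ hs => Set.mem_sInter.mpr fun _ hX => hX.2 hs

noncomputable instance instInfCIdl (C : P → Set P → Prop) : InfSet (CIdl C) :=
  ⟨fun S => ⟨⋂₀ (Subtype.val '' S),
    isCIdeal_sInter C _ (by rintro X ⟨Y, _, rfl⟩; exact Y.2)⟩⟩

noncomputable instance instCompleteLatticeCIdl (C : P → Set P → Prop) :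
    CompleteLattice (CIdl C) :=
  completeLatticeOfInf _ (by
    intro S
    constructor
    · intro X hX
      exact fun a ha => Set.mem_sInter.mp ha X.1 ⟨X, hX, rfl⟩
    · intro Y hY a ha
      refine Set.mem_sInter.mpr ?_
      rintro Z ⟨X, hX, rfl⟩
      exact hY hX ha)

/-- The natural map `x ↦ ⟨x⟩` from a presentation into its `C`-ideals. -/
def etaC (C : P → Set P → Prop) (x : P) : CIdl C := ⟨genC C {x}, isCIdeal_genC C _⟩

/-- The free dcpo over a dcpo presentation: the least family of `C`-ideals containing
all principal `C`-ideals and closed under directed joins. -/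
def OverC (C : P → Set P → Prop) : Set (CIdl C) :=
  ⋂₀ {Y | (∀ x, etaC C x ∈ Y) ∧
      ∀ S ⊆ Y, S.Nonempty → DirectedOn (· ≤ ·) S → sSup S ∈ Y}

end Pres

section Filt
variable {A : Type*}

/-- `F` is a filter: nonempty, upward closed, downward directed. -/
def IsFilt [Preorder A] (F : Set A) : Prop :=
  F.Nonempty ∧ (∀ a ∈ F, ∀ b, a ≤ b → b ∈ F) ∧
    ∀ a ∈ F, ∀ b ∈ F, ∃ c ∈ F, c ≤ a ∧ c ≤ b

/-- `I` is an ideal: nonempty, downward closed, upward directed. -/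
def IsIdl [Preorder A] (I : Set A) : Prop :=
  I.Nonempty ∧ (∀ a ∈ I, ∀ b, b ≤ a → b ∈ I) ∧
    ∀ a ∈ I, ∀ b ∈ I, ∃ c ∈ I, a ≤ c ∧ b ≤ c

/-- The free co-directed meet completion of `A`: filters ordered by reverse inclusion. -/
def FComp (A : Type u) [Preorder A] : Type u := {F : Set A // IsFilt F}

instance [Preorder A] : PartialOrder (FComp A) where
  le x y := y.1 ⊆ x.1
  le_refl x := subset_rfl
  le_trans x y z h1 h2 := Set.Subset.trans h2 h1
  le_antisymm x y h1 h2 := Subtype.ext (subset_antisymm h2 h1)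

/-- The embedding `↑ : A → ℱ(A)` sending `a` to the principal filter. -/
def pf [Preorder A] (a : A) : FComp A :=
  ⟨{b | a ≤ b}, ⟨a, le_refl a⟩, fun x hx b hb => le_trans hx hb,
    fun x hx y hy => ⟨a, le_refl a, hx, hy⟩⟩

noncomputable instance [Lattice A] [BoundedOrder A] : InfSet (FComp A) :=
  ⟨fun S => ⟨⋂₀ {F | IsFilt F ∧ ∀ x ∈ S, x.1 ⊆ F}, by
    refine ⟨⟨⊤, ?_⟩, ?_, ?_⟩
    · refine Set.mem_sInter.mpr ?_
      rintro F ⟨⟨⟨w, hw⟩, hup, _⟩, _⟩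
      exact hup w hw ⊤ le_top
    · intro a ha b hab
      refine Set.mem_sInter.mpr fun F hF => ?_
      exact hF.1.2.1 a (Set.mem_sInter.mp ha F hF) b hab
    · intro a ha b hb
      refine ⟨a ⊓ b, ?_, inf_le_left, inf_le_right⟩
      refine Set.mem_sInter.mpr fun F hF => ?_
      obtain ⟨c, hc, hca, hcb⟩ :=
        hF.1.2.2 a (Set.mem_sInter.mp ha F hF) b (Set.mem_sInter.mp hb F hF)
      exact hF.1.2.1 c hc (a ⊓ b) (le_inf hca hcb)⟩⟩

noncomputable instance [Lattice A] [BoundedOrder A] : CompleteLattice (FComp A) :=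
  completeLatticeOfInf _ (by
    intro S
    constructor
    · intro x hx
      show x.1 ⊆ (sInf S).1
      intro a ha
      exact Set.mem_sInter.mpr fun F hF => hF.2 x hx ha
    · intro y hY
      show (sInf S).1 ⊆ y.1
      intro a ha
      exact Set.mem_sInter.mp ha y.1 ⟨y.2, fun x hx => hY hx⟩)

/-- The lifting of a monotone map to the filter completions. -/
def liftF {ι : Type*} {A : ι → Type*} {B : Type*} [∀ i, Preorder (A i)] [Preorder B]
    (f : (∀ i, A i) → B) (hf : Monotone f) (x : ∀ i, FComp (A i)) : FComp B :=
  ⟨{b | ∃ a : ∀ i, A i, (∀ i, a i ∈ (x i).1) ∧ f a ≤ b}, by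
    refine ⟨?_, ?_, ?_⟩
    · exact ⟨f (fun i => ((x i).2.1).choose), fun i => ((x i).2.1).choose,
        fun i => ((x i).2.1).choose_spec, le_rfl⟩
    · rintro b ⟨a, ha, hab⟩ c hbc
      exact ⟨a, ha, hab.trans hbc⟩
    · rintro b ⟨a1, ha1, h1⟩ c ⟨a2, ha2, h2⟩
      choose g hg hga1 hga2 using fun i => (x i).2.2.2 (a1 i) (ha1 i) (a2 i) (ha2 i)
      exact ⟨f g, ⟨g, hg, le_rfl⟩, (hf fun i => hga1 i).trans h1,
        (hf fun i => hga2 i).trans h2⟩⟩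

/-- The co-Scott continuous extension of binary join to the filter completion. -/
def supF [Lattice A] (x y : FComp A) : FComp A :=
  liftF (A := fun _ : Fin 2 => A) (fun a => a 0 ⊔ a 1)
    (fun _ _ hab => sup_le_sup (hab 0) (hab 1)) ![x, y]

/-- The co-Scott continuous extension of binary meet to the filter completion. -/
def infF [Lattice A] (x y : FComp A) : FComp A :=
  liftF (A := fun _ : Fin 2 => A) (fun a => a 0 ⊓ a 1)
    (fun _ _ hab => inf_le_inf (hab 0) (hab 1)) ![x, y]

/-- A map is co-Scott continuous if it preserves meets of nonempty co-directed sets. -/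
def CoScottCont {α β : Type*} [Preorder α] [Preorder β] (g : α → β) : Prop :=
  ∀ S : Set α, S.Nonempty → DirectedOn (· ≥ ·) S → ∀ x, IsGLB S x → IsGLB (g '' S) (g x)

/-- A map is Scott continuous if it preserves joins of nonempty directed sets. -/
def ScottContOn {α β : Type*} [Preorder α] [Preorder β] (T : Set α) (g : α → β) : Prop :=
  ∀ S ⊆ T, S.Nonempty → DirectedOn (· ≤ ·) S → ∀ x, IsLUB S x → IsLUB (g '' S) (g x)

/-- The covering relation `C_A` of the dcpo presentation `Δ(A)` on `ℱ(A)`. -/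
def covD [Preorder A] (x : FComp A) (U : Set (FComp A)) : Prop :=
  U.Nonempty ∧ DirectedOn (· ≤ ·) U ∧
    ∀ I : Set A, IsIdl I → (∀ x' ∈ U, ∃ a' ∈ I, x' ≤ pf a') → ∃ a ∈ I, x ≤ pf a

/-- `e : A → C` is a canonical extension: a dense and compact lattice completion. -/
def IsCanExt {A C : Type*} [Lattice A] [CompleteLattice C] (e : A → C) : Prop :=
  (∀ a b, e a ≤ e b ↔ a ≤ b) ∧
  (∀ a b, e (a ⊔ b) = e a ⊔ e b) ∧
  (∀ a b, e (a ⊓ b) = e a ⊓ e b) ∧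
  (∀ u v : C, ¬ u ≤ v → ∃ F I : Set A, IsFilt F ∧ IsIdl I ∧
    sInf (e '' F) ≤ u ∧ ¬ sInf (e '' F) ≤ v ∧ v ≤ sSup (e '' I) ∧ ¬ u ≤ sSup (e '' I)) ∧
  (∀ F I : Set A, IsFilt F → IsIdl I → sInf (e '' F) ≤ sSup (e '' I) →
    ∃ b ∈ F, ∃ a ∈ I, b ≤ a)

/-- `f` is an operator: it preserves binary joins in each coordinate. -/
def IsOperator {ι : Type*} [DecidableEq ι] {A : ι → Type*} {B : Type*}
    [∀ i, Lattice (A i)] [Lattice B] (f : (∀ i, A i) → B) : Prop :=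
  ∀ (a : ∀ i, A i) (i : ι) (b : A i),
    f (Function.update a i (a i ⊔ b)) = f a ⊔ f (Function.update a i b)

end Filt

section Terms

/-- Terms over a signature `Ω` with arities `ar`, in `n` variables. -/
inductive OTerm (Ω : Type*) (ar : Ω → ℕ) (n : ℕ) : Type _ where
  | var : Fin n → OTerm Ω ar n
  | op : (ω : Ω) → (Fin (ar ω) → OTerm Ω ar n) → OTerm Ω ar n

/-- Evaluation of a term under an interpretation of the operation symbols. -/
def evalT {Ω : Type*} {ar : Ω → ℕ} {n : ℕ} {A : Type*}
    (interp : ∀ ω, (Fin (ar ω) → A) → A) (v : Fin n → A) : OTerm Ω ar n → A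
  | .var i => v i
  | .op ω args => interp ω (fun j => evalT interp v (args j))

end Terms

/-- The dcpo-lifting `f^ℱ-bar` of the extension `f^ℱ` of `f` to the canonical extensions
(realized as the lattices of `C_A`-ideals). -/
def liftBar {n : ℕ} {A : Fin n → Type*} {B : Type*} [∀ i, Lattice (A i)]
    [∀ i, BoundedOrder (A i)] [Lattice B] [BoundedOrder B]
    (f : (∀ i, A i) → B) (hf : Monotone f)
    (X : ∀ i, CIdl (covD (A := A i))) : CIdl (covD (A := B)) :=
  ⟨genC (covD (A := B))
      {b | ∃ x : ∀ i, FComp (A i), (∀ i, x i ∈ (X i).1) ∧ b = liftF f hf x},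
    isCIdeal_genC _ _⟩

/-- The sigma-extension of `f`: defined on closed elements by meets of images and on
arbitrary elements by joins over closed tuples below. -/
noncomputable def fsigma {n : ℕ} {A : Fin n → Type*} {B : Type*} [∀ i, Lattice (A i)]
    [∀ i, BoundedOrder (A i)] [Lattice B] [BoundedOrder B]
    (f : (∀ i, A i) → B)
    (u : ∀ i, CIdl (covD (A := A i))) : CIdl (covD (A := B)) :=
  sSup {w | ∃ x : ∀ i, FComp (A i), (∀ i, etaC (covD (A := A i)) (x i) ≤ u i) ∧
    w = sInf {z | ∃ a : ∀ i, A i, (∀ i, x i ≤ pf (a i)) ∧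
      z = etaC (covD (A := B)) (pf (f a))}}


/-!
Principal down-sets `↓y` of `ℱ(A)` are already `C_A`-ideals, so the meet defining `f^σ` on a
closed tuple `x` is the principal ideal of `f^ℱ(x) = ⋀ {↑(f a) | a ∈ x}`. Hence `f^σ(u)`
and `f^ℱ-bar(u)` are both the `C_B`-ideal generated by the `f^ℱ(x)` with `x ∈ u`.

For Scott continuity, each coordinate of `⋁ S` is the `C_A`-ideal generated by the union of
the corresponding coordinates of `S`. Because `f` preserves binary joins in each argument,
`f^ℱ` sends covers in one coordinate to covers, so the tuples `x` with
`f^ℱ(x) ∈ ⋁ f^ℱ-bar[S]` form a `C_A`-ideal in each coordinate separately. Replacing the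
coordinates one at a time, it suffices to treat tuples drawn from the members of `S`, and
finitely many of those lie below a single member since `S` is directed.
-/

open Function

section CIdeals

variable {P : Type*} [Preorder P] {C : P → Set P → Prop}

lemma genC_subset {S X : Set P} (hX : IsCIdeal C X) (hSX : S ⊆ X) : genC C S ⊆ X :=
  Set.sInter_subset_of_mem ⟨hX, hSX⟩

lemma etaC_le_iff {p : P} {X : CIdl C} : etaC C p ≤ X ↔ p ∈ X.1 :=
  ⟨fun h => h (subset_genC C {p} rfl),
    fun h => genC_subset X.2 (Set.singleton_subset_iff.mpr h)⟩

lemma CIdl.mem_sInf {Z : Set (CIdl C)} {p : P} : p ∈ (sInf Z).1 ↔ ∀ X ∈ Z, p ∈ X.1 := by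
  change p ∈ ⋂₀ (Subtype.val '' Z) ↔ _
  simp

lemma CIdl.coe_sSup (W : Set (CIdl C)) : (sSup W).1 = genC C (⋃ X ∈ W, X.1) := by
  refine subset_antisymm ?_
    (genC_subset (sSup W : CIdl C).2 (Set.iUnion₂_subset fun X hX => le_sSup hX))
  exact (sSup_le fun X hX => (subset_genC C _).trans' (Set.subset_biUnion_of_mem hX) :
    sSup W ≤ ⟨genC C (⋃ X ∈ W, X.1), isCIdeal_genC C _⟩)

lemma CIdl.mk_genC_eq_sSup (S : Set P) :
    (⟨genC C S, isCIdeal_genC C S⟩ : CIdl C) = sSup (etaC C '' S) := by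
  refine le_antisymm (genC_subset (sSup (etaC C '' S)).2 fun p hp => ?_) (sSup_le ?_)
  · exact etaC_le_iff.mp (le_sSup (Set.mem_image_of_mem _ hp))
  · rintro _ ⟨p, hp, rfl⟩
    exact etaC_le_iff.mpr (subset_genC C S hp)

lemma CIdl.coe_sSup_apply {ι : Type*} {Q : ι → Type*} [∀ i, Preorder (Q i)]
    {D : ∀ i, Q i → Set (Q i) → Prop} (S : Set (∀ i, CIdl (D i))) (i : ι) :
    (sSup S i).1 = genC (D i) (⋃ u ∈ S, (u i).1) := by
  rw [sSup_apply_eq_sSup_image, CIdl.coe_sSup, Set.biUnion_image]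

end CIdeals

lemma genC_pi_induction {ι : Type*} [Fintype ι] [DecidableEq ι] {Q : ι → Type*}
    [∀ i, Preorder (Q i)] {C : ∀ i, Q i → Set (Q i) → Prop} {Y : ∀ i, Set (Q i)}
    {Φ : (∀ i, Q i) → Prop} (hΦ : ∀ x k, IsCIdeal (C k) {y | Φ (update x k y)})
    (hY : ∀ x, (∀ i, x i ∈ Y i) → Φ x) {x : ∀ i, Q i}
    (hx : ∀ i, x i ∈ genC (C i) (Y i)) : Φ x := by
  suffices h : ∀ s : Finset ι, ∀ x : ∀ i, Q i, (∀ i ∈ s, x i ∈ genC (C i) (Y i)) →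
      (∀ i ∉ s, x i ∈ Y i) → Φ x from
    h Finset.univ x (fun i _ => hx i) fun i hi => absurd (Finset.mem_univ i) hi
  intro s
  induction s using Finset.induction_on with
  | empty => exact fun x _ hrest => hY x fun i => hrest i (Finset.notMem_empty i)
  | insert k s hks ih =>
    intro x hgen hrest
    have hYk : Y k ⊆ {y | Φ (update x k y)} := by
      intro y hy
      refine ih _ (fun i hi => ?_) fun i hi => ?_
      · rw [update_of_ne (ne_of_mem_of_not_mem hi hks)]
        exact hgen i (Finset.mem_insert_of_mem hi)
      · rcases eq_or_ne i k with rfl | hik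
        · simpa using hy
        · rw [update_of_ne hik]
          exact hrest i (by simp [hik, hi])
    simpa using genC_subset (hΦ x k) hYk (hgen k (Finset.mem_insert_self k s))

lemma DirectedOn.exists_forall_le {α ι : Type*} [Preorder α] [Fintype ι] {S : Set α}
    (hS : DirectedOn (· ≤ ·) S) (hne : S.Nonempty) (g : ι → α) (hg : ∀ i, g i ∈ S) :
    ∃ u ∈ S, ∀ i, g i ≤ u := by
  classical
  have := hne.to_subtype
  obtain ⟨u, hu⟩ := hS.directed_val.finset_le (Finset.univ.image fun i => (⟨g i, hg i⟩ : S))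
  exact ⟨u, u.2, fun i => hu ⟨g i, hg i⟩ (Finset.mem_image_of_mem _ (Finset.mem_univ i))⟩

section FilterCompletion

variable {A : Type*} [Preorder A]

lemma le_pf_iff {x : FComp A} {a : A} : x ≤ pf a ↔ a ∈ x.1 :=
  ⟨fun h => h (le_refl a), fun h _ hb => x.2.2.1 a h _ hb⟩

lemma isCIdeal_covD_Iic (y : FComp A) : IsCIdeal covD (Set.Iic y) := by
  refine ⟨fun w hw v hv => hv.trans hw, ?_⟩
  rintro w U ⟨hUne, -, hU⟩ hUy b hb
  have hIic : IsIdl (Set.Iic b) :=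
    ⟨⟨b, le_rfl⟩, fun c hc d hd => hd.trans hc, fun c hc d hd => ⟨b, le_rfl, hc, hd⟩⟩
  obtain ⟨a, hab, hwa⟩ :=
    hU (Set.Iic b) hIic fun u hu => ⟨b, le_rfl, (hUy hu).trans (le_pf_iff.mpr hb)⟩
  exact w.2.2.1 a (le_pf_iff.mp hwa) b hab

lemma mem_etaC_covD_iff {w y : FComp A} : w ∈ (etaC covD y).1 ↔ w ≤ y := by
  refine ⟨fun hw => genC_subset (isCIdeal_covD_Iic y) (by simp) hw, fun hw => ?_⟩
  exact (isCIdeal_genC covD {y}).1 y (subset_genC covD {y} rfl) w hw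

end FilterCompletion

section LiftF

variable {ι : Type*} {A : ι → Type*} {B : Type*}

section Preorder

variable [∀ i, Preorder (A i)] [Preorder B] (f : (∀ i, A i) → B) (hf : Monotone f)

lemma liftF_mono : Monotone (liftF f hf) := by
  rintro x y hxy b ⟨a, ha, hab⟩
  exact ⟨a, fun i => hxy i (ha i), hab⟩

lemma le_liftF_iff {x : ∀ i, FComp (A i)} {w : FComp B} :
    w ≤ liftF f hf x ↔ ∀ a : ∀ i, A i, (∀ i, a i ∈ (x i).1) → w ≤ pf (f a) := by
  refine ⟨fun h a ha => h.trans (le_pf_iff.mpr ⟨a, ha, le_rfl⟩), ?_⟩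
  rintro h b ⟨a, ha, hab⟩
  exact w.2.2.1 _ (le_pf_iff.mp (h a ha)) b hab

lemma sInf_etaC_pf_eq (x : ∀ i, FComp (A i)) :
    sInf {z | ∃ a : ∀ i, A i, (∀ i, x i ≤ pf (a i)) ∧ z = etaC covD (pf (f a))} =
      etaC covD (liftF f hf x) := by
  refine Subtype.ext (Set.ext fun w => ?_)
  rw [CIdl.mem_sInf, mem_etaC_covD_iff, le_liftF_iff]
  constructor
  · exact fun h a ha => mem_etaC_covD_iff.mp (h _ ⟨a, fun i => le_pf_iff.mpr (ha i), rfl⟩)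
  · rintro h _ ⟨a, ha, rfl⟩
    exact mem_etaC_covD_iff.mpr (h a fun i => le_pf_iff.mp (ha i))

end Preorder

section Operator

variable [DecidableEq ι] [∀ i, Lattice (A i)] [Lattice B] (f : (∀ i, A i) → B)

-- the `c` for which `f^ℱ(x[k ↦ ↑c])` lies below some element of `J`
def sliceIdl (x : ∀ i, FComp (A i)) (k : ι) (J : Set B) : Set (A k) :=
  {c | ∃ a : ∀ i, A i, (∀ j ≠ k, a j ∈ (x j).1) ∧ f (update a k c) ∈ J}

lemma isIdl_sliceIdl (hf : Monotone f) (hop : IsOperator f) (x : ∀ i, FComp (A i)) (k : ι)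
    {J : Set B} (hJ : IsIdl J) (hne : (sliceIdl f x k J).Nonempty) : IsIdl (sliceIdl f x k J) := by
  refine ⟨hne, ?_, ?_⟩
  · rintro c ⟨a, ha, haJ⟩ c' hc'
    exact ⟨a, ha, hJ.2.1 _ haJ _ (hf (update_mono hc'))⟩
  · rintro c₁ ⟨a₁, ha₁, h₁⟩ c₂ ⟨a₂, ha₂, h₂⟩
    set a := a₁ ⊓ a₂
    have hmem : ∀ j ≠ k, a j ∈ (x j).1 := fun j hj => by
      obtain ⟨d, hd, hd₁, hd₂⟩ := (x j).2.2.2 _ (ha₁ j hj) _ (ha₂ j hj)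
      exact (x j).2.2.1 d hd _ (le_inf hd₁ hd₂)
    have h₁' : f (update a k c₁) ∈ J :=
      hJ.2.1 _ h₁ _ (hf (update_le_update_iff.mpr ⟨le_rfl, fun j _ => inf_le_left⟩))
    have h₂' : f (update a k c₂) ∈ J :=
      hJ.2.1 _ h₂ _ (hf (update_le_update_iff.mpr ⟨le_rfl, fun j _ => inf_le_right⟩))
    have hsup : f (update a k (c₁ ⊔ c₂)) = f (update a k c₁) ⊔ f (update a k c₂) := by
      simpa using hop (update a k c₁) k c₂
    obtain ⟨d, hd, hd₁, hd₂⟩ := hJ.2.2 _ h₁' _ h₂'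
    exact ⟨c₁ ⊔ c₂, ⟨a, hmem, hsup ▸ hJ.2.1 d hd _ (sup_le hd₁ hd₂)⟩,
      le_sup_left, le_sup_right⟩

lemma covD_liftF_update (hf : Monotone f) (hop : IsOperator f) (x : ∀ i, FComp (A i)) (k : ι)
    {y : FComp (A k)} {U : Set (FComp (A k))} (hcov : covD y U) :
    covD (liftF f hf (update x k y)) ((fun u => liftF f hf (update x k u)) '' U) := by
  obtain ⟨hUne, hUdir, hU⟩ := hcov
  have hmono : Monotone fun u => liftF f hf (update x k u) := (liftF_mono f hf).comp update_mono
  refine ⟨hUne.image _, hUdir.mono_comp hmono, fun J hJ hUJ => ?_⟩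
  have hslice : ∀ u ∈ U, ∃ c ∈ sliceIdl f x k J, u ≤ pf c := by
    intro u hu
    obtain ⟨b, hbJ, hb⟩ := hUJ _ ⟨u, hu, rfl⟩
    obtain ⟨a, ha, hab⟩ := le_pf_iff.mp hb
    refine ⟨a k, ⟨a, fun j hj => by simpa [hj] using ha j, ?_⟩,
      le_pf_iff.mpr (by simpa using ha k)⟩
    simpa using hJ.2.1 _ hbJ _ hab
  have hIdl : IsIdl (sliceIdl f x k J) := by
    refine isIdl_sliceIdl f hf hop x k hJ ?_
    obtain ⟨u, hu⟩ := hUne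
    obtain ⟨c, hc, -⟩ := hslice u hu
    exact ⟨c, hc⟩
  obtain ⟨c, ⟨a, ha, haJ⟩, hyc⟩ := hU _ hIdl hslice
  refine ⟨_, haJ, le_pf_iff.mpr ⟨update a k c, fun i => ?_, le_rfl⟩⟩
  rcases eq_or_ne i k with rfl | hik
  · simpa using le_pf_iff.mp hyc
  · simpa [hik] using ha i hik

lemma isCIdeal_setOf_liftF_update_mem (hf : Monotone f) (hop : IsOperator f)
    (W : CIdl (covD (A := B))) (x : ∀ i, FComp (A i)) (k : ι) :
    IsCIdeal covD {y | liftF f hf (update x k y) ∈ W.1} := by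
  refine ⟨fun y hy y' hy' => W.2.1 _ hy _ (liftF_mono f hf (update_mono hy')), ?_⟩
  intro y U hcov hU
  exact W.2.2 _ _ (covD_liftF_update f hf hop x k hcov) (Set.image_subset_iff.mpr hU)

end Operator

end LiftF

section LiftBar

variable {n : ℕ} {A : Fin n → Type*} {B : Type*} [∀ i, Lattice (A i)]
  [∀ i, BoundedOrder (A i)] [Lattice B] [BoundedOrder B] (f : (∀ i, A i) → B)
  (hf : Monotone f)

lemma liftBar_mono : Monotone (liftBar f hf) := by
  intro u v huv
  refine genC_subset (isCIdeal_genC _ _) ?_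
  rintro _ ⟨x, hx, rfl⟩
  exact subset_genC _ _ ⟨x, fun i => huv i (hx i), rfl⟩

lemma liftBar_sSup (hop : IsOperator f) {S : Set (∀ i, CIdl (covD (A := A i)))}
    (hne : S.Nonempty) (hdir : DirectedOn (· ≤ ·) S) :
    liftBar f hf (sSup S) = sSup (liftBar f hf '' S) := by
  refine le_antisymm ?_ (sSup_le (Set.forall_mem_image.mpr fun u hu =>
    liftBar_mono f hf (le_sSup hu)))
  set W := sSup (liftBar f hf '' S)
  refine genC_subset W.2 ?_
  rintro _ ⟨x, hx, rfl⟩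
  refine genC_pi_induction (C := fun i => covD) (Y := fun i => ⋃ u ∈ S, (u i).1)
    (Φ := fun x => liftF f hf x ∈ W.1) (isCIdeal_setOf_liftF_update_mem f hf hop W)
    (fun x hx => ?_) fun i => CIdl.coe_sSup_apply S i ▸ hx i
  choose g hgS hxg using fun i => Set.mem_iUnion₂.mp (hx i)
  obtain ⟨u, huS, hgu⟩ := hdir.exists_forall_le hne g hgS
  exact (le_sSup (Set.mem_image_of_mem _ huS) : liftBar f hf u ≤ W)
    (subset_genC _ _ ⟨x, fun i => hgu i i (hxg i), rfl⟩)

lemma liftBar_eq_fsigma : liftBar f hf = fsigma f := by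
  funext u
  simp_rw [fsigma, sInf_etaC_pf_eq f hf]
  rw [liftBar, CIdl.mk_genC_eq_sSup]
  congr 1
  ext w
  simp [etaC_le_iff, eq_comm]

end LiftBar

/-- for an operator `f` between lattices, the dcpo-lifted extension of `f^ℱ`
is Scott-continuous and agrees with the sigma-extension `f^σ`. -/
theorem statement18 {n : ℕ} {A : Fin n → Type*} {B : Type*}
    [∀ i, Lattice (A i)] [∀ i, BoundedOrder (A i)] [Lattice B] [BoundedOrder B]
    (f : (∀ i, A i) → B) (hf : Monotone f) (hop : IsOperator f) :
    (∀ S : Set (∀ i, CIdl (covD (A := A i))), S.Nonempty → DirectedOn (· ≤ ·) S →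
      liftBar f hf (sSup S) = sSup (liftBar f hf '' S)) ∧
    liftBar f hf = fsigma f :=
  ⟨fun _ hne hdir => liftBar_sSup f hf hop hne hdir, liftBar_eq_fsigma f hf⟩
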